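/- In a finite-horizon MDP, for every step h, the gap-visitation term satisfies: inf_π max_{s,a} min{1/(w^π_h(s,a) Δ̃_h(s,a)²), W_h(s)²/(w^π_h(s,a) ε²)} ≤ ∑_{s,a} min{1/(W_h(s) Δ̃_h(s,a)²), W_h(s)/ε²}, where the infimum is over all (possibly stochastic) policies. -/

import Mathlib

open scoped ENNReal Classical

open Finset in
/-- A finite-horizon MDP with finite state and action spaces, horizon `H`
(steps indexed `0, …, H-1`), initial state distribution `P0`, transition kernels `P`,
and mean rewards `r` in `[0,1]`. -/
structure MDP (S A : Type*) [Fintype S] [Fintype A] where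
  H : ℕ
  P0 : S → ℝ
  P0_nonneg : ∀ s, 0 ≤ P0 s
  P0_sum : ∑ s, P0 s = 1
  P : ℕ → S → A → S → ℝ
  P_nonneg : ∀ h s a s', 0 ≤ P h s a s'
  P_sum : ∀ h s a, ∑ s', P h s a s' = 1
  r : ℕ → S → A → ℝ
  r_nonneg : ∀ h s a, 0 ≤ r h s a
  r_le_one : ∀ h s a, r h s a ≤ 1

/-- A (stochastic) policy: `π h s a` is the probability of playing `a` in state `s` at step `h`. -/
def Policy (S A : Type*) : Type _ := ℕ → S → A → ℝ

/-- `π` is a genuine stochastic policy: nonnegative and summing to one over actions. -/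
def IsPolicy {S A : Type*} [Fintype A] (π : Policy S A) : Prop :=
  (∀ h s a, 0 ≤ π h s a) ∧ ∀ h s, ∑ a, π h s a = 1

/-- The stochastic policy corresponding to a deterministic policy `d`. -/
noncomputable def detPolicy {S A : Type*} [DecidableEq A] (d : ℕ → S → A) : Policy S A :=
  fun h s a => if a = d h s then 1 else 0

variable {S A : Type*} [Fintype S] [Fintype A]

/-- Value function computed backwards: `Vaux M π k s` is the expected reward-to-go of
policy `π` from state `s` when `k` steps remain (i.e. at step `H - k`). -/
noncomputable def Vaux (M : MDP S A) (π : Policy S A) : ℕ → S → ℝ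
  | 0, _ => 0
  | (k+1), s =>
      ∑ a, π (M.H - (k+1)) s a *
        (M.r (M.H - (k+1)) s a + ∑ s', M.P (M.H - (k+1)) s a s' * Vaux M π k s')

/-- `Vfun M π h s = V^π_h(s)`, the value of policy `π` at state `s`, step `h`. -/
noncomputable def Vfun (M : MDP S A) (π : Policy S A) (h : ℕ) (s : S) : ℝ :=
  Vaux M π (M.H - h) s

/-- `Qfun M π h s a = Q^π_h(s,a)` via the Bellman equation. -/
noncomputable def Qfun (M : MDP S A) (π : Policy S A) (h : ℕ) (s : S) (a : A) : ℝ :=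
  M.r h s a + ∑ s', M.P h s a s' * Vfun M π (h+1) s'

/-- `visit M π h s = w^π_h(s) = Pr_π[s_h = s]`, the state visitation probability. -/
noncomputable def visit (M : MDP S A) (π : Policy S A) : ℕ → S → ℝ
  | 0, s => M.P0 s
  | (h+1), s => ∑ s', ∑ a, visit M π h s' * π h s' a * M.P h s' a s

/-- `visitSA M π h s a = w^π_h(s,a) = Pr_π[s_h = s, a_h = a]`. -/
noncomputable def visitSA (M : MDP S A) (π : Policy S A) (h : ℕ) (s : S) (a : A) : ℝ :=
  visit M π h s * π h s a

/-- `Vstar M h s = V^*_h(s)`, the optimal value function. -/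
noncomputable def Vstar (M : MDP S A) (h : ℕ) (s : S) : ℝ :=
  ⨆ π : {π : Policy S A // IsPolicy π}, Vfun M π.1 h s

/-- `Qstar M h s a = Q^*_h(s,a)`, the optimal Q-function. -/
noncomputable def Qstar (M : MDP S A) (h : ℕ) (s : S) (a : A) : ℝ :=
  M.r h s a + ∑ s', M.P h s a s' * Vstar M (h+1) s'

/-- `Wmax M h s = W_h(s) = sup_π Pr_π[s_h = s]`, the maximum reachability of `s` at step `h`. -/
noncomputable def Wmax (M : MDP S A) (h : ℕ) (s : S) : ℝ :=
  ⨆ π : {π : Policy S A // IsPolicy π}, visit M π.1 h s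

/-- `V0 M π = V^π_0`, the value of policy `π`. -/
noncomputable def V0 (M : MDP S A) (π : Policy S A) : ℝ :=
  ∑ s, M.P0 s * Vfun M π 0 s

/-- `Vstar0 M = V^*_0 = sup_π V^π_0`. -/
noncomputable def Vstar0 (M : MDP S A) : ℝ :=
  ⨆ π : {π : Policy S A // IsPolicy π}, V0 M π.1


/-! ### Auxiliary lemmas -/

section Aux

lemma visit_nonneg (M : MDP S A) {π : Policy S A} (hπ : ∀ h s a, 0 ≤ π h s a) :
    ∀ h s, 0 ≤ visit M π h s
  | 0, s => M.P0_nonneg s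
  | (h+1), s => by
    simp only [visit]
    refine Finset.sum_nonneg fun s' _ => Finset.sum_nonneg fun a _ => ?_
    exact mul_nonneg (mul_nonneg (visit_nonneg M hπ h s') (hπ h s' a)) (M.P_nonneg h s' a s)

lemma visit_sum_one (M : MDP S A) {π : Policy S A} (hπ : IsPolicy π) :
    ∀ h, ∑ s, visit M π h s = 1
  | 0 => M.P0_sum
  | (h+1) => by
    have IH := visit_sum_one M hπ h
    simp only [visit]
    rw [Finset.sum_comm]
    have key : ∀ s', ∑ s, ∑ a, visit M π h s' * π h s' a * M.P h s' a s = visit M π h s' := by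
      intro s'
      rw [Finset.sum_comm]
      have h1 : ∀ a, ∑ s, visit M π h s' * π h s' a * M.P h s' a s
          = visit M π h s' * π h s' a := by
        intro a; rw [← Finset.mul_sum, M.P_sum, mul_one]
      rw [Finset.sum_congr rfl fun a _ => h1 a, ← Finset.mul_sum, hπ.2, mul_one]
    rw [Finset.sum_congr rfl fun s' _ => key s', IH]

lemma visit_le_one (M : MDP S A) {π : Policy S A} (hπ : IsPolicy π) (h : ℕ) (s : S) :
    visit M π h s ≤ 1 := by
  have := visit_sum_one M hπ h
  calc visit M π h s ≤ ∑ s', visit M π h s' :=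
        Finset.single_le_sum (fun s' _ => visit_nonneg M hπ.1 h s') (Finset.mem_univ s)
    _ = 1 := this

/-- The uniform policy. -/
noncomputable def unifPolicy : Policy S A := fun _ _ _ => (Fintype.card A : ℝ)⁻¹

lemma unifPolicy_isPolicy [Nonempty A] : IsPolicy (unifPolicy : Policy S A) := by
  constructor
  · intro _ _ _
    simp only [unifPolicy]
    positivity
  · intro _ _
    simp only [unifPolicy, Finset.sum_const, Finset.card_univ, nsmul_eq_mul]
    rw [mul_inv_cancel₀]
    exact_mod_cast Fintype.card_ne_zero

instance [Nonempty A] : Nonempty {π : Policy S A // IsPolicy π} :=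
  ⟨⟨unifPolicy, unifPolicy_isPolicy⟩⟩

lemma visit_bddAbove (M : MDP S A) (h : ℕ) (s : S) :
    BddAbove (Set.range fun π : {π : Policy S A // IsPolicy π} => visit M π.1 h s) := by
  refine ⟨1, ?_⟩
  rintro x ⟨π, rfl⟩
  exact visit_le_one M π.2 h s

lemma visit_le_Wmax (M : MDP S A) {π : Policy S A} (hπ : IsPolicy π) (h : ℕ) (s : S) :
    visit M π h s ≤ Wmax M h s :=
  le_ciSup (visit_bddAbove M h s) (⟨π, hπ⟩ : {π : Policy S A // IsPolicy π})

lemma Wmax_nonneg [Nonempty A] (M : MDP S A) (h : ℕ) (s : S) : 0 ≤ Wmax M h s :=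
  le_trans (visit_nonneg M unifPolicy_isPolicy.1 h s) (visit_le_Wmax M unifPolicy_isPolicy h s)

/-- Visitation probabilities at step `h` only depend on the policy before step `h`. -/
lemma visit_congr (M : MDP S A) {π₁ π₂ : Policy S A} :
    ∀ h, (∀ k, k < h → π₁ k = π₂ k) → ∀ s, visit M π₁ h s = visit M π₂ h s
  | 0, _, s => rfl
  | (h+1), hag, s => by
    simp only [visit]
    refine Finset.sum_congr rfl fun s' _ => Finset.sum_congr rfl fun a _ => ?_
    rw [visit_congr M h (fun k hk => hag k (hk.trans (Nat.lt_succ_self h))) s',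
      hag h (Nat.lt_succ_self h)]

/-- The mixture policy realizing a convex combination of visitation distributions. -/
noncomputable def mixP (M : MDP S A) (lam : S → ℝ) (f : S → Policy S A) : Policy S A :=
  fun k s a =>
    if 0 < ∑ i, lam i * visit M (f i) k s then
      (∑ i, lam i * visit M (f i) k s * f i k s a) / (∑ i, lam i * visit M (f i) k s)
    else (Fintype.card A : ℝ)⁻¹

lemma mixP_mul (M : MDP S A) (lam : S → ℝ) (f : S → Policy S A)
    (hlam : ∀ i, 0 ≤ lam i) (hf : ∀ i, IsPolicy (f i)) (k : ℕ) (s : S) (a : A) :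
    (∑ i, lam i * visit M (f i) k s) * mixP M lam f k s a
      = ∑ i, lam i * visit M (f i) k s * f i k s a := by
  set D := ∑ i, lam i * visit M (f i) k s with hD
  have hDnn : 0 ≤ D := Finset.sum_nonneg fun i _ =>
    mul_nonneg (hlam i) (visit_nonneg M (hf i).1 k s)
  by_cases hpos : 0 < D
  · simp only [mixP, ← hD, if_pos hpos]
    field_simp
  · have hD0 : D = 0 := le_antisymm (not_lt.1 hpos) hDnn
    have hz : ∀ i ∈ Finset.univ, lam i * visit M (f i) k s = 0 :=
      (Finset.sum_eq_zero_iff_of_nonneg fun i _ =>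
        mul_nonneg (hlam i) (visit_nonneg M (hf i).1 k s)).1 hD0
    rw [hD0, zero_mul]
    refine (Finset.sum_eq_zero fun i hi => ?_).symm
    rw [hz i hi, zero_mul]

lemma mixP_isPolicy [Nonempty A] (M : MDP S A) (lam : S → ℝ) (f : S → Policy S A)
    (hlam : ∀ i, 0 ≤ lam i) (hf : ∀ i, IsPolicy (f i)) : IsPolicy (mixP M lam f) := by
  constructor
  · intro k s a
    simp only [mixP]
    split
    · refine div_nonneg (Finset.sum_nonneg fun i _ => ?_) (by linarith)
      exact mul_nonneg (mul_nonneg (hlam i) (visit_nonneg M (hf i).1 k s)) ((hf i).1 k s a)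
    · positivity
  · intro k s
    by_cases hpos : 0 < ∑ i, lam i * visit M (f i) k s
    · simp only [mixP, if_pos hpos]
      rw [← Finset.sum_div]
      rw [Finset.sum_comm]
      have : ∀ i, ∑ a, lam i * visit M (f i) k s * f i k s a
          = lam i * visit M (f i) k s := by
        intro i; rw [← Finset.mul_sum, (hf i).2, mul_one]
      rw [Finset.sum_congr rfl fun i _ => this i, div_self (ne_of_gt hpos)]
    · simp only [mixP, if_neg hpos, Finset.sum_const, Finset.card_univ, nsmul_eq_mul]
      rw [mul_inv_cancel₀]
      exact_mod_cast Fintype.card_ne_zero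

lemma mixP_visit (M : MDP S A) (lam : S → ℝ) (f : S → Policy S A)
    (hlam : ∀ i, 0 ≤ lam i) (hlam1 : ∑ i, lam i = 1) (hf : ∀ i, IsPolicy (f i)) :
    ∀ k s, visit M (mixP M lam f) k s = ∑ i, lam i * visit M (f i) k s
  | 0, s => by simp only [visit, ← Finset.sum_mul, hlam1, one_mul]
  | (k+1), s => by
    have IH := mixP_visit M lam f hlam hlam1 hf k
    simp only [visit]
    have step : ∀ s' a, visit M (mixP M lam f) k s' * mixP M lam f k s' a * M.P k s' a s
        = ∑ i, lam i * visit M (f i) k s' * f i k s' a * M.P k s' a s := by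
      intro s' a
      rw [IH s', mixP_mul M lam f hlam hf k s' a, Finset.sum_mul]
    rw [Finset.sum_congr rfl fun s' _ => Finset.sum_congr rfl fun a _ => step s' a]
    have swap : ∀ s', ∑ a, ∑ i, lam i * visit M (f i) k s' * f i k s' a * M.P k s' a s
        = ∑ i, lam i * (∑ a, visit M (f i) k s' * f i k s' a * M.P k s' a s) := by
      intro s'
      rw [Finset.sum_comm]
      refine Finset.sum_congr rfl fun i _ => ?_
      rw [Finset.mul_sum]
      refine Finset.sum_congr rfl fun a _ => by ring
    rw [Finset.sum_congr rfl fun s' _ => swap s']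
    rw [Finset.sum_comm]
    refine Finset.sum_congr rfl fun i _ => ?_
    rw [← Finset.mul_sum]

/-- Key per-term computation in `ℝ≥0∞`. -/
lemma key_term (W g ε t Tsum ρ w : ℝ) (hW : 0 < W) (hε : 0 < ε) (ht : 0 < t)
    (hTsum : 0 < Tsum) (hρ : 0 < ρ)
    (hT : ENNReal.ofReal t = min (1 / (ENNReal.ofReal W * ENNReal.ofReal g ^ 2))
      (ENNReal.ofReal W / ENNReal.ofReal ε ^ 2))
    (hw : ρ * W * t / Tsum ≤ w) :
    min (1 / (ENNReal.ofReal w * ENNReal.ofReal g ^ 2))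
        (ENNReal.ofReal W ^ 2 / (ENNReal.ofReal w * ENNReal.ofReal ε ^ 2))
      ≤ ENNReal.ofReal (Tsum / ρ) := by
  set Wf := ENNReal.ofReal W with hWf
  set G := ENNReal.ofReal g with hG
  set E := ENNReal.ofReal ε with hE
  have hW0 : Wf ≠ 0 := (ENNReal.ofReal_pos.2 hW).ne'
  have hWT : Wf ≠ ⊤ := ENNReal.ofReal_ne_top
  set c : ℝ := ρ * t / Tsum with hc
  have hc0 : 0 < c := by positivity
  set d := ENNReal.ofReal c with hdd
  have hd0 : d ≠ 0 := (ENNReal.ofReal_pos.2 hc0).ne'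
  have hdT : d ≠ ⊤ := ENNReal.ofReal_ne_top
  have hcw : c * W ≤ w := by
    calc c * W = ρ * W * t / Tsum := by rw [hc]; ring
      _ ≤ w := hw
  have h1 : d * Wf ≤ ENNReal.ofReal w := by
    rw [hdd, hWf, ← ENNReal.ofReal_mul hc0.le]
    exact ENNReal.ofReal_le_ofReal hcw
  have step1 : min (1 / (ENNReal.ofReal w * G ^ 2))
      (Wf ^ 2 / (ENNReal.ofReal w * E ^ 2))
      ≤ min (1 / (d * Wf * G ^ 2)) (Wf ^ 2 / (d * Wf * E ^ 2)) := by
    refine min_le_min ?_ ?_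
    · exact ENNReal.div_le_div le_rfl (mul_le_mul_left h1 _)
    · exact ENNReal.div_le_div le_rfl (mul_le_mul_left h1 _)
  have e1 : 1 / (d * Wf * G ^ 2) = d⁻¹ * (1 / (Wf * G ^ 2)) := by
    rw [mul_assoc, one_div, one_div,
      ENNReal.mul_inv (Or.inl hd0) (Or.inl hdT)]
  have e2 : Wf ^ 2 / (d * Wf * E ^ 2) = d⁻¹ * (Wf / E ^ 2) := by
    have : Wf ^ 2 / (d * Wf * E ^ 2) = d⁻¹ * (Wf ^ 2 / (Wf * E ^ 2)) := by
      rw [mul_assoc, div_eq_mul_inv, ENNReal.mul_inv (Or.inl hd0) (Or.inl hdT),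
        div_eq_mul_inv]
      ring
    rw [this, sq, ENNReal.mul_div_mul_left _ _ hW0 hWT]
  have hmin : ∀ X Y : ℝ≥0∞, min (d⁻¹ * X) (d⁻¹ * Y) = d⁻¹ * min X Y := by
    intro X Y
    rcases le_total X Y with hXY | hXY
    · rw [min_eq_left hXY, min_eq_left (mul_le_mul_right hXY _)]
    · rw [min_eq_right hXY, min_eq_right (mul_le_mul_right hXY _)]
  calc min (1 / (ENNReal.ofReal w * G ^ 2)) (Wf ^ 2 / (ENNReal.ofReal w * E ^ 2))
      ≤ min (1 / (d * Wf * G ^ 2)) (Wf ^ 2 / (d * Wf * E ^ 2)) := step1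
    _ = d⁻¹ * min (1 / (Wf * G ^ 2)) (Wf / E ^ 2) := by rw [e1, e2, hmin]
    _ = d⁻¹ * ENNReal.ofReal t := by rw [← hT]
    _ = ENNReal.ofReal c⁻¹ * ENNReal.ofReal t := by
        rw [hdd, ← ENNReal.ofReal_inv_of_pos hc0]
    _ = ENNReal.ofReal (c⁻¹ * t) := (ENNReal.ofReal_mul (by positivity)).symm
    _ = ENNReal.ofReal (Tsum / ρ) := by
        congr 1
        rw [hc]
        field_simp

end Aux

/-- The per-step gap-visitation term is bounded by the corresponding sum over
state-action pairs weighted by the maximum reachability: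
`inf_π max_{s,a} min{1/(w^π_h(s,a)Δ̃²), W_h(s)²/(w^π_h(s,a)ε²)}
  ≤ ∑_{s,a} min{1/(W_h(s)Δ̃²), W_h(s)/ε²}`.
Divisions are in `ℝ≥0∞` (so `x/0 = ∞` for `x > 0`), hence terms with `W_h(s) = 0`
contribute `0` to the right-hand side. -/
theorem gap_visitation_le_sum [Nonempty A] (M : MDP S A) (h : ℕ)
    (g : S → A → ℝ) (hg : ∀ s a, 0 ≤ g s a) (ε : ℝ) (hε : 0 < ε) :
    (⨅ π : {π : Policy S A // IsPolicy π}, ⨆ s, ⨆ a,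
        min (1 / (ENNReal.ofReal (visitSA M π.1 h s a) * ENNReal.ofReal (g s a) ^ 2))
            (ENNReal.ofReal (Wmax M h s) ^ 2 /
              (ENNReal.ofReal (visitSA M π.1 h s a) * ENNReal.ofReal ε ^ 2)))
      ≤ ∑ s, ∑ a,
          min (1 / (ENNReal.ofReal (Wmax M h s) * ENNReal.ofReal (g s a) ^ 2))
              (ENNReal.ofReal (Wmax M h s) / ENNReal.ofReal ε ^ 2) := by
  classical
  -- abbreviations
  set t : S → A → ℝ := fun s a =>
    (min (1 / (ENNReal.ofReal (Wmax M h s) * ENNReal.ofReal (g s a) ^ 2))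
      (ENNReal.ofReal (Wmax M h s) / ENNReal.ofReal ε ^ 2)).toReal with htdef
  have hE2 : (ENNReal.ofReal ε ^ 2 : ℝ≥0∞) ≠ 0 :=
    pow_ne_zero _ (ENNReal.ofReal_pos.2 hε).ne'
  have hE2T : (ENNReal.ofReal ε ^ 2 : ℝ≥0∞) ≠ ⊤ :=
    ENNReal.pow_ne_top ENNReal.ofReal_ne_top
  have hTne : ∀ s a, (min (1 / (ENNReal.ofReal (Wmax M h s) * ENNReal.ofReal (g s a) ^ 2))
      (ENNReal.ofReal (Wmax M h s) / ENNReal.ofReal ε ^ 2)) ≠ ⊤ :=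
    fun s a => ((min_le_right _ _).trans_lt
      (ENNReal.div_lt_top ENNReal.ofReal_ne_top hE2)).ne
  have ht0 : ∀ s a, 0 ≤ t s a := fun s a => ENNReal.toReal_nonneg
  have hofReal_t : ∀ s a, ENNReal.ofReal (t s a)
      = min (1 / (ENNReal.ofReal (Wmax M h s) * ENNReal.ofReal (g s a) ^ 2))
        (ENNReal.ofReal (Wmax M h s) / ENNReal.ofReal ε ^ 2) :=
    fun s a => ENNReal.ofReal_toReal (hTne s a)
  have hW0T : ∀ s a, t s a = 0 → Wmax M h s = 0 := by
    intro s a hz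
    have hTz : min (1 / (ENNReal.ofReal (Wmax M h s) * ENNReal.ofReal (g s a) ^ 2))
        (ENNReal.ofReal (Wmax M h s) / ENNReal.ofReal ε ^ 2) = 0 := by
      rw [← hofReal_t, hz, ENNReal.ofReal_zero]
    by_contra hW
    have hWpos : 0 < Wmax M h s := lt_of_le_of_ne (Wmax_nonneg M h s) (Ne.symm hW)
    have h1 : (0:ℝ≥0∞) < 1 / (ENNReal.ofReal (Wmax M h s) * ENNReal.ofReal (g s a) ^ 2) :=
      ENNReal.div_pos one_ne_zero
        (ENNReal.mul_ne_top ENNReal.ofReal_ne_top (ENNReal.pow_ne_top ENNReal.ofReal_ne_top))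
    have h2 : (0:ℝ≥0∞) < ENNReal.ofReal (Wmax M h s) / ENNReal.ofReal ε ^ 2 :=
      ENNReal.div_pos (ENNReal.ofReal_pos.2 hWpos).ne' hE2T
    exact absurd hTz (lt_min h1 h2).ne'
  set Tsum : ℝ := ∑ s, ∑ a, t s a with hTsumdef
  have hRHS : ENNReal.ofReal Tsum
      = ∑ s, ∑ a, min (1 / (ENNReal.ofReal (Wmax M h s) * ENNReal.ofReal (g s a) ^ 2))
        (ENNReal.ofReal (Wmax M h s) / ENNReal.ofReal ε ^ 2) := by
    rw [hTsumdef,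
      ENNReal.ofReal_sum_of_nonneg (fun s _ => Finset.sum_nonneg fun a _ => ht0 s a)]
    refine Finset.sum_congr rfl fun s _ => ?_
    rw [ENNReal.ofReal_sum_of_nonneg fun a _ => ht0 s a]
    exact Finset.sum_congr rfl fun a _ => hofReal_t s a
  rw [← hRHS]
  have hTsum0 : 0 ≤ Tsum :=
    Finset.sum_nonneg fun s _ => Finset.sum_nonneg fun a _ => ht0 s a
  rcases eq_or_lt_of_le hTsum0 with hTsumz | hTsumpos
  · -- degenerate case: all terms vanish
    have hz : ∀ s a, t s a = 0 := by
      intro s a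
      have h1 : ∑ a', t s a' = 0 := by
        have := (Finset.sum_eq_zero_iff_of_nonneg fun s' (_ : s' ∈ Finset.univ) =>
          Finset.sum_nonneg fun a _ => ht0 s' a).1 hTsumz.symm
        exact this s (Finset.mem_univ s)
      exact (Finset.sum_eq_zero_iff_of_nonneg fun a' _ => ht0 s a').1 h1 a (Finset.mem_univ a)
    have hW : ∀ s, Wmax M h s = 0 := fun s => hW0T s (Classical.arbitrary A) (hz s _)
    refine le_trans (iInf_le _ ⟨unifPolicy, unifPolicy_isPolicy⟩) ?_
    refine le_trans (iSup_le fun s => iSup_le fun a => ?_) zero_le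
    refine le_trans (min_le_right _ _) ?_
    rw [hW s]
    simp
  · -- main case
    refine ENNReal.le_of_forall_pos_le_add fun η hη _ => ?_
    have hηr : (0:ℝ) < (η:ℝ) := hη
    set ρ : ℝ := Tsum / (Tsum + η) with hρdef
    have hρ0 : 0 < ρ := by positivity
    have hρ1 : ρ < 1 := by
      rw [hρdef, div_lt_one (by positivity)]
      linarith
    -- near-optimal policies for each state
    have hex : ∀ s, ∃ π : Policy S A, IsPolicy π ∧ ρ * Wmax M h s ≤ visit M π h s := by
      intro s
      rcases eq_or_lt_of_le (Wmax_nonneg M h s) with hWz | hWpos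
      · exact ⟨unifPolicy, unifPolicy_isPolicy, by
          rw [← hWz, mul_zero]; exact visit_nonneg M unifPolicy_isPolicy.1 h s⟩
      · have hlt : ρ * Wmax M h s < Wmax M h s := by nlinarith
        obtain ⟨π, hπ⟩ := exists_lt_of_lt_ciSup
          (show ρ * Wmax M h s < ⨆ π : {π : Policy S A // IsPolicy π}, visit M π.1 h s from hlt)
        exact ⟨π.1, π.2, hπ.le⟩
    choose f hfp hfv using hex
    set lam : S → ℝ := fun s => (∑ a, t s a) / Tsum with hlamdef
    have hlam : ∀ s, 0 ≤ lam s := fun s =>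
      div_nonneg (Finset.sum_nonneg fun a _ => ht0 s a) hTsum0
    have hlam1 : ∑ s, lam s = 1 := by
      rw [hlamdef, ← Finset.sum_div, ← hTsumdef, div_self hTsumpos.ne']
    set μ : S → A → ℝ := fun s a =>
      if 0 < ∑ a', t s a' then t s a / ∑ a', t s a' else (Fintype.card A : ℝ)⁻¹ with hμdef
    set πf : Policy S A := fun k => if k = h then μ else mixP M lam f k with hπfdef
    have hμpol : ∀ s, (∀ a, 0 ≤ μ s a) ∧ ∑ a, μ s a = 1 := by
      intro s
      constructor
      · intro a
        simp only [hμdef]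
        split
        · exact div_nonneg (ht0 s a) (by positivity)
        · positivity
      · by_cases hp : 0 < ∑ a', t s a'
        · simp only [hμdef, if_pos hp]
          rw [← Finset.sum_div, div_self hp.ne']
        · simp only [hμdef, if_neg hp, Finset.sum_const, Finset.card_univ, nsmul_eq_mul]
          rw [mul_inv_cancel₀]
          exact_mod_cast Fintype.card_ne_zero
    have hmixpol := mixP_isPolicy M lam f hlam hfp
    have hπf : IsPolicy πf := by
      constructor
      · intro k s a
        simp only [hπfdef]
        split
        · exact (hμpol s).1 a
        · exact hmixpol.1 k s a
      · intro k s
        simp only [hπfdef]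
        split
        · exact (hμpol s).2
        · exact hmixpol.2 k s
    have hvis : ∀ s, visit M πf h s = ∑ i, lam i * visit M (f i) h s := by
      intro s
      rw [visit_congr M h (fun k hk => by simp only [hπfdef]; exact if_neg hk.ne) s]
      exact mixP_visit M lam f hlam hlam1 hfp h s
    refine le_trans (iInf_le _ ⟨πf, hπf⟩) ?_
    refine iSup_le fun s => iSup_le fun a => ?_
    by_cases hts : 0 < t s a
    · -- main bound via key_term
      have hW : 0 < Wmax M h s := by
        rcases eq_or_lt_of_le (Wmax_nonneg M h s) with hWz | hWpos
        · exfalso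
          have hz : ENNReal.ofReal (Wmax M h s) = 0 := by
            rw [← hWz]; exact ENNReal.ofReal_zero
          have htz : t s a = 0 := by
            simp only [htdef, hz, ENNReal.zero_div]
            simp
          exact hts.ne' htz
        · exact hWpos
      have hsum_a : 0 < ∑ a', t s a' :=
        lt_of_lt_of_le hts (Finset.single_le_sum (fun a' _ => ht0 s a') (Finset.mem_univ a))
      have hμa : πf h s a = t s a / ∑ a', t s a' := by
        simp only [hπfdef, hμdef, if_pos rfl, if_pos hsum_a]
      have h1 : lam s * (ρ * Wmax M h s) ≤ lam s * visit M (f s) h s :=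
        mul_le_mul_of_nonneg_left (hfv s) (hlam s)
      have h2 : lam s * visit M (f s) h s ≤ visit M πf h s := by
        rw [hvis s]
        exact Finset.single_le_sum
          (fun i _ => mul_nonneg (hlam i) (visit_nonneg M (hfp i).1 h s)) (Finset.mem_univ s)
      have h4 : (lam s * (ρ * Wmax M h s)) * (t s a / ∑ a', t s a')
          ≤ visitSA M πf h s a := by
        rw [visitSA, hμa]
        exact mul_le_mul_of_nonneg_right (h1.trans h2) (div_nonneg (ht0 s a) hsum_a.le)
      have h5 : ρ * Wmax M h s * t s a / Tsum
          = (lam s * (ρ * Wmax M h s)) * (t s a / ∑ a', t s a') := by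
        rw [hlamdef]
        field_simp
      have hwge : ρ * Wmax M h s * t s a / Tsum ≤ visitSA M πf h s a := h5 ▸ h4
      refine le_trans (key_term (Wmax M h s) (g s a) ε (t s a) Tsum ρ
        (visitSA M πf h s a) hW hε hts hTsumpos hρ0 (hofReal_t s a) hwge) ?_
      have : Tsum / ρ = Tsum + η := by
        rw [hρdef]
        field_simp
      rw [this, ENNReal.ofReal_add hTsum0 hηr.le, ENNReal.ofReal_coe_nnreal]
    · -- vanishing term
      have htz : t s a = 0 := le_antisymm (not_lt.1 hts) (ht0 s a)
      have hW : Wmax M h s = 0 := hW0T s a htz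
      refine le_trans (min_le_right _ _) ?_
      rw [hW]
      simp
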